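/- With P = [[0,0],[0,1]], Φ(t,s) the evolution matrix of z' = -Aᵀ z for A = [[1,0],[1,0]], and H = [[1,0],[0,0]], the matrix W = ∫₀^{2π} P·Φ(2π,s)·Hᵀ·H·Φ(2π,s)ᵀ·P ds is the zero matrix. -/

import Mathlib

open Real Matrix

noncomputable def G0 : ℝ → Matrix (Fin 2) (Fin 2) ℝ :=
  fun t => !![Real.exp (-t), Real.exp (-t) - 1; 0, 1]

/-- Evolution matrix Φ(2π, s) = G(2π) G(s)⁻¹ of z' = -Aᵀ z. -/
noncomputable def Phi0 (s : ℝ) : Matrix (Fin 2) (Fin 2) ℝ := G0 (2 * π) * (G0 s)⁻¹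

noncomputable def P0 : Matrix (Fin 2) (Fin 2) ℝ := !![0,0;0,1]

noncomputable def H0 : Matrix (Fin 2) (Fin 2) ℝ := !![1,0;0,0]

/-! Every G(t) is upper triangular, hence so is Φ(2π, s). The projection P kills the first
column of an upper triangular matrix, which is all that Hᵀ keeps, so already P Φ(2π, s) Hᵀ = 0
and the integrand vanishes identically. -/

theorem Matrix.BlockTriangular.nonsing_inv {m α R : Type*} [Fintype m] [DecidableEq m]
    [LinearOrder α] [CommRing R] {M : Matrix m m R} {b : m → α} (hM : M.BlockTriangular b) :
    M⁻¹.BlockTriangular b := by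
  by_cases hdet : IsUnit M.det
  · have := M.invertibleOfIsUnitDet hdet
    exact blockTriangular_inv_of_blockTriangular hM
  · rw [nonsing_inv_apply_not_isUnit M hdet]
    exact blockTriangular_zero

theorem G0_blockTriangular (t : ℝ) : (G0 t).BlockTriangular id := by
  intro i j hij
  fin_cases i <;> fin_cases j <;> simp_all [G0]

theorem Phi0_blockTriangular (s : ℝ) : (Phi0 s).BlockTriangular id :=
  (G0_blockTriangular _).mul (G0_blockTriangular s).nonsing_inv

theorem P0_mul_mul_H0_transpose_eq_zero {M : Matrix (Fin 2) (Fin 2) ℝ}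
    (hM : M.BlockTriangular id) : P0 * M * H0ᵀ = 0 := by
  have h10 : M 1 0 = 0 := hM (by decide)
  ext i j
  fin_cases i <;> fin_cases j <;> simp [P0, H0, mul_apply, vecMul, dotProduct, Fin.sum_univ_two, h10]

/-- W = ∫₀^{2π} P Φ(2π,s) Hᵀ H Φ(2π,s)ᵀ P ds is the zero matrix. -/
theorem stmt5 (W : Matrix (Fin 2) (Fin 2) ℝ)
    (hW : ∀ i j : Fin 2,
      W i j = ∫ s in (0:ℝ)..(2 * π), (P0 * Phi0 s * H0ᵀ * H0 * (Phi0 s)ᵀ * P0) i j) :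
    W = 0 := by
  have integrand_eq_zero (s : ℝ) : P0 * Phi0 s * H0ᵀ * H0 * (Phi0 s)ᵀ * P0 = 0 := by
    rw [P0_mul_mul_H0_transpose_eq_zero (Phi0_blockTriangular s), Matrix.zero_mul,
      Matrix.zero_mul, Matrix.zero_mul]
  ext i j
  simp only [hW, integrand_eq_zero, Matrix.zero_apply, intervalIntegral.integral_zero]
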